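/- If G is a connected claw-free finite simple graph of order n ≥ 2, then Ψ⁺_g(G) ≥ n/2, i.e., 2·Ψ⁺_g(G) ≥ n. -/

import Mathlib

namespace EnclavelessGame

variable {V : Type*} [Fintype V] [DecidableEq V]

/-- `v` is an enclave of `S` if `v ∈ S` and its closed neighborhood `N[v]` is contained in `S`. -/
def IsEnclave (G : SimpleGraph V) (S : Finset V) (v : V) : Prop :=
  v ∈ S ∧ ∀ u, G.Adj v u → u ∈ S

/-- `S` is enclaveless if it contains no enclave. -/
def IsEnclaveless (G : SimpleGraph V) (S : Finset V) : Prop :=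
  ∀ v, ¬ IsEnclave G S v

instance (G : SimpleGraph V) [DecidableRel G.Adj] (S : Finset V) :
    Decidable (IsEnclaveless G S) := by
  unfold IsEnclaveless IsEnclave
  infer_instance

/-- `D` is a dominating set: every vertex lies in the closed neighborhood
of some vertex of `D`. -/
def IsDominating (G : SimpleGraph V) (D : Finset V) : Prop :=
  ∀ v, ∃ u ∈ D, u = v ∨ G.Adj u v

/-- `D` is a minimal dominating set (minimal with respect to set inclusion). -/
def IsMinimalDominating (G : SimpleGraph V) (D : Finset V) : Prop :=
  IsDominating G D ∧ ∀ D' ⊆ D, IsDominating G D' → D' = D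

/-- `S` is a maximal enclaveless set (maximal with respect to set inclusion). -/
def IsMaximalEnclaveless (G : SimpleGraph V) (S : Finset V) : Prop :=
  IsEnclaveless G S ∧ ∀ T, S ⊆ T → IsEnclaveless G T → T = S

/-- The domination number `γ(G)`: minimum cardinality of a dominating set. -/
noncomputable def domNum (G : SimpleGraph V) : ℕ :=
  sInf {k | ∃ D : Finset V, IsDominating G D ∧ D.card = k}

/-- The upper domination number `Γ(G)`: maximum cardinality of a minimal dominating set. -/
noncomputable def upperDomNum (G : SimpleGraph V) : ℕ :=
  sSup {k | ∃ D : Finset V, IsMinimalDominating G D ∧ D.card = k}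

/-- The enclaveless number `Ψ(G)`: maximum cardinality of an enclaveless set. -/
noncomputable def enclavelessNum (G : SimpleGraph V) : ℕ :=
  sSup {k | ∃ S : Finset V, IsEnclaveless G S ∧ S.card = k}

/-- The lower enclaveless number `ψ(G)`: minimum cardinality of a maximal enclaveless set. -/
noncomputable def lowerEnclavelessNum (G : SimpleGraph V) : ℕ :=
  sInf {k | ∃ S : Finset V, IsMaximalEnclaveless G S ∧ S.card = k}

/-- The set of playable vertices given the set `S` of already chosen vertices:
vertices `v ∉ S` such that `S ∪ {v}` is enclaveless. -/
def playableSet (G : SimpleGraph V) [DecidableRel G.Adj] (S : Finset V) : Finset V :=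
  Finset.univ.filter (fun v => v ∉ S ∧ IsEnclaveless G (insert v S))

/-- The value of the competition-enclaveless game from position `S`: `maxTurn = true`
means it is Maximizer's turn (this computes `MaxVal S`), and `maxTurn = false` means it
is Minimizer's turn (this computes `MinVal S`). If no vertex is playable the value is
`|S|`; otherwise it is the max (resp. min) over playable `v` of the value of
`S ∪ {v}` with the turn switched. -/
def gameVal (G : SimpleGraph V) [DecidableRel G.Adj] (maxTurn : Bool) (S : Finset V) : ℕ :=
  if h : (playableSet G S).Nonempty then
    if maxTurn then
      (playableSet G S).attach.sup' (by simpa using h)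
        (fun v => gameVal G false (insert v.1 S))
    else
      (playableSet G S).attach.inf' (by simpa using h)
        (fun v => gameVal G true (insert v.1 S))
  else S.card
termination_by Sᶜ.card
decreasing_by
  all_goals
    have hv := v.2
    simp only [playableSet, Finset.mem_filter] at hv
    rw [Finset.compl_insert]
    exact Finset.card_erase_lt_of_mem (Finset.mem_compl.mpr hv.2.1)

/-- The Maximizer-start enclaveless game number `Ψ⁺_g(G) = MaxVal ∅`. -/
def maxStartGameNum (G : SimpleGraph V) [DecidableRel G.Adj] : ℕ := gameVal G true ∅

/-- The Minimizer-start enclaveless game number `Ψ⁻_g(G) = MinVal ∅`. -/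
def minStartGameNum (G : SimpleGraph V) [DecidableRel G.Adj] : ℕ := gameVal G false ∅

/-- `G` is claw-free: it contains no induced `K_{1,3}`, i.e. no vertex has three
pairwise non-adjacent neighbors. -/
def ClawFree (G : SimpleGraph V) : Prop :=
  ¬ ∃ (v : V) (T : Finset V), T.card = 3 ∧ (∀ u ∈ T, G.Adj v u) ∧
      ∀ a ∈ T, ∀ b ∈ T, a ≠ b → ¬ G.Adj a b

end EnclavelessGame

/-! The exchange argument of Sumner and Las Vergnas shows that a maximum matching of a connected
claw-free graph leaves at most one vertex unmatched: of two unmatched vertices at minimal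
distance, a claw at the second vertex of a shortest path between them always allows an exchange
that brings two unmatched vertices closer.

If every vertex outside a maximal enclaveless set `T` is matched, then `Tᶜ` injects into `T`:
a vertex `v ∉ T` goes to its partner when the partner lies in `T`, and otherwise to a vertex of
`T` whose only neighbour outside `T` is `v`, which exists by maximality of `T`. Every play ends
in a maximal enclaveless set, and Maximizer's first move puts the unmatched vertex (if any)
into it, so the final set has at least `n / 2` vertices. -/

namespace EnclavelessGame

variable {V : Type*} {G : SimpleGraph V}

lemma _root_.SimpleGraph.Connected.exists_adj_dist_add_one_eq (hconn : G.Connected) {u w : V}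
    (huw : u ≠ w) : ∃ x, G.Adj u x ∧ G.dist x w + 1 = G.dist u w := by
  obtain ⟨p, hp⟩ := hconn.exists_walk_length_eq_dist u w
  cases p with
  | nil => exact absurd rfl huw
  | @cons _ x _ hux q =>
    have hle : G.dist x w ≤ q.length := SimpleGraph.dist_le q
    have hge : G.dist u w ≤ G.dist u x + G.dist x w := hconn.dist_triangle
    rw [SimpleGraph.dist_eq_one_iff_adj.2 hux] at hge
    refine ⟨x, hux, ?_⟩
    rw [SimpleGraph.Walk.length_cons] at hp
    omega

lemma IsEnclaveless.mono {S T : Finset V} (hT : IsEnclaveless G T) (hST : S ⊆ T) :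
    IsEnclaveless G S :=
  fun v hv => hT v ⟨hST hv.1, fun u hu => hST (hv.2 u hu)⟩

variable [DecidableEq V]

def IsMatching (G : SimpleGraph V) (M : Finset (Finset V)) : Prop :=
  (∀ e ∈ M, ∃ a b, G.Adj a b ∧ e = {a, b}) ∧ (M : Set (Finset V)).PairwiseDisjoint id

def support (M : Finset (Finset V)) : Finset V := M.biUnion id

def IsMaximumMatching (G : SimpleGraph V) (M : Finset (Finset V)) : Prop :=
  IsMatching G M ∧ ∀ N, IsMatching G N → N.card ≤ M.card

lemma mem_support {M : Finset (Finset V)} {v : V} : v ∈ support M ↔ ∃ e ∈ M, v ∈ e := by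
  simp [support]

lemma support_insert (e : Finset V) (M : Finset (Finset V)) :
    support (insert e M) = e ∪ support M := by
  simp [support, Finset.biUnion_insert]

lemma IsMatching.support_erase {M : Finset (Finset V)} (hM : IsMatching G M) {e : Finset V}
    (he : e ∈ M) : support (M.erase e) = support M \ e := by
  ext v
  simp only [mem_support, Finset.mem_erase, Finset.mem_sdiff]
  constructor
  · rintro ⟨f, ⟨hfe, hf⟩, hvf⟩
    exact ⟨⟨f, hf, hvf⟩, fun hve => hfe (hM.2.elim_finset hf he v hvf hve)⟩
  · rintro ⟨⟨f, hf, hvf⟩, hve⟩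
    exact ⟨f, ⟨by rintro rfl; exact hve hvf, hf⟩, hvf⟩

lemma IsMatching.mono {M N : Finset (Finset V)} (hM : IsMatching G M) (hNM : N ⊆ M) :
    IsMatching G N :=
  ⟨fun e he => hM.1 e (hNM he), hM.2.subset (by simpa using hNM)⟩

lemma IsMatching.insert {M : Finset (Finset V)} (hM : IsMatching G M) {a b : V}
    (hab : G.Adj a b) (ha : a ∉ support M) (hb : b ∉ support M) :
    IsMatching G (insert {a, b} M) := by
  refine ⟨fun e he => ?_, ?_⟩
  · rcases Finset.mem_insert.1 he with rfl | he
    exacts [⟨a, b, hab, rfl⟩, hM.1 e he]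
  · rw [Finset.coe_insert]
    refine hM.2.insert fun f hf _ => ?_
    simp only [id, Finset.disjoint_insert_left, Finset.disjoint_singleton_left]
    exact ⟨fun h => ha (mem_support.2 ⟨f, hf, h⟩), fun h => hb (mem_support.2 ⟨f, hf, h⟩)⟩

lemma pair_notMem_of_notMem_support {M : Finset (Finset V)} {a : V} (ha : a ∉ support M)
    (b : V) : ({a, b} : Finset V) ∉ M :=
  fun h => ha (mem_support.2 ⟨_, h, Finset.mem_insert_self a {b}⟩)

lemma IsMatching.ne_of_pair_mem {M : Finset (Finset V)} (hM : IsMatching G M) {a b : V}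
    (hab : {a, b} ∈ M) : a ≠ b := by
  rintro rfl
  obtain ⟨c, d, hcd, he⟩ := hM.1 _ hab
  have hc : c ∈ ({a, a} : Finset V) := he ▸ Finset.mem_insert_self c {d}
  have hd : d ∈ ({a, a} : Finset V) := he ▸ Finset.mem_insert_of_mem (Finset.mem_singleton_self d)
  simp only [Finset.mem_insert, Finset.mem_singleton, or_self] at hc hd
  exact hcd.ne (hc.trans hd.symm)

lemma IsMatching.eq_of_pair_mem_of_pair_mem {M : Finset (Finset V)} (hM : IsMatching G M)
    {a b x : V} (ha : {a, x} ∈ M) (hb : {b, x} ∈ M) : a = b := by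
  have hab : ({a, x} : Finset V) = {b, x} := hM.2.elim_finset ha hb x (by simp) (by simp)
  have : a ∈ ({b, x} : Finset V) := hab ▸ Finset.mem_insert_self a {x}
  simp only [Finset.mem_insert, Finset.mem_singleton] at this
  exact this.resolve_right (hM.ne_of_pair_mem ha)

lemma IsMatching.exists_pair_mem {M : Finset (Finset V)} (hM : IsMatching G M) {x : V}
    (hx : x ∈ support M) : ∃ y, G.Adj x y ∧ {x, y} ∈ M := by
  obtain ⟨e, he, hxe⟩ := mem_support.1 hx
  obtain ⟨a, b, hab, rfl⟩ := hM.1 e he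
  rcases Finset.mem_insert.1 hxe with rfl | hxb
  · exact ⟨b, hab, he⟩
  · rw [Finset.mem_singleton.1 hxb, Finset.pair_comm] at *
    exact ⟨a, hab.symm, he⟩

lemma exists_isMaximumMatching [Fintype V] (G : SimpleGraph V) : ∃ M, IsMaximumMatching G M := by
  classical
  obtain ⟨M, hM, hmax⟩ := Finset.exists_max_image (Finset.univ.filter (IsMatching G))
    Finset.card ⟨∅, by simp [IsMatching]⟩
  exact ⟨M, (Finset.mem_filter.1 hM).2, fun N hN => hmax N (by simpa using hN)⟩

lemma IsMaximumMatching.not_adj {M : Finset (Finset V)} (hM : IsMaximumMatching G M) {a b : V}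
    (ha : a ∉ support M) (hb : b ∉ support M) : ¬ G.Adj a b := fun hab => by
  have := hM.2 _ (hM.1.insert hab ha hb)
  rw [Finset.card_insert_of_notMem (pair_notMem_of_notMem_support ha b)] at this
  omega

lemma IsMaximumMatching.swap {M : Finset (Finset V)} (hM : IsMaximumMatching G M) {u x y : V}
    (hxy : {x, y} ∈ M) (hux : G.Adj u x) (hu : u ∉ support M) :
    IsMaximumMatching G (insert {u, x} (M.erase {x, y})) ∧
      support (insert {u, x} (M.erase {x, y})) = insert u ((support M).erase y) := by
  have hsupp := hM.1.support_erase hxy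
  have hu' : u ∉ support (M.erase {x, y}) := by simp [hsupp, hu]
  have hx' : x ∉ support (M.erase {x, y}) := by simp [hsupp]
  refine ⟨⟨(hM.1.mono (Finset.erase_subset _ _)).insert hux hu' hx', fun N hN => ?_⟩, ?_⟩
  · rw [Finset.card_insert_of_notMem (pair_notMem_of_notMem_support hu' x),
      Finset.card_erase_add_one hxy]
    exact hM.2 N hN
  · have hx : x ∈ support M := mem_support.2 ⟨_, hxy, Finset.mem_insert_self x {y}⟩
    have hxy' : x ≠ y := hM.1.ne_of_pair_mem hxy
    ext z
    simp only [support_insert, hsupp, Finset.mem_union, Finset.mem_insert, Finset.mem_singleton,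
      Finset.mem_sdiff, Finset.mem_erase]
    by_cases hzx : z = x
    · subst hzx; tauto
    · tauto

lemma ClawFree.adj_or_adj_or_adj (hclaw : ClawFree G) {v a b c : V} (ha : G.Adj v a)
    (hb : G.Adj v b) (hc : G.Adj v c) (hab : a ≠ b) (hac : a ≠ c) (hbc : b ≠ c) :
    G.Adj a b ∨ G.Adj a c ∨ G.Adj b c := by
  by_contra! h
  refine hclaw ⟨v, {a, b, c}, Finset.card_eq_three.2 ⟨a, b, c, hab, hac, hbc, rfl⟩,
    by simp [ha, hb, hc], ?_⟩
  simp only [Finset.mem_insert, Finset.mem_singleton]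
  rintro x (rfl | rfl | rfl) y (rfl | rfl | rfl) hxy <;> simp_all [G.adj_comm]

/-- With `x₁` the second vertex of a shortest `u`-`w` path and `{x₁, y}` its matching edge, trade
that edge for `{u, x₁}` (freeing `y`) or, when the claw at `x₁` forces `u ~ y`, for `{u, y}`
(freeing `x₁`). -/
lemma IsMaximumMatching.exists_closer (hconn : G.Connected) (hclaw : ClawFree G)
    {M : Finset (Finset V)} (hM : IsMaximumMatching G M) {u w : V} (hu : u ∉ support M)
    (hw : w ∉ support M) (huw : u ≠ w) :
    ∃ M' u', IsMaximumMatching G M' ∧ u' ∉ support M' ∧ w ∉ support M' ∧ u' ≠ w ∧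
      G.dist u' w < G.dist u w := by
  obtain ⟨x₁, hux₁, hx₁w_dist⟩ := hconn.exists_adj_dist_add_one_eq huw
  have hx₁w : x₁ ≠ w := by
    rintro rfl
    exact hM.not_adj hu hw hux₁
  have hx₁ : x₁ ∈ support M := by
    by_contra hx₁
    exact hM.not_adj hu hx₁ hux₁
  obtain ⟨y, hx₁y, hy⟩ := hM.1.exists_pair_mem hx₁
  have hy_supp : y ∈ support M := mem_support.2 ⟨_, hy, by simp⟩
  have hyu : y ≠ u := by rintro rfl; exact hu hy_supp
  have hyw : y ≠ w := by rintro rfl; exact hw hy_supp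
  obtain ⟨x₂, hx₁x₂, hx₂w_dist⟩ := hconn.exists_adj_dist_add_one_eq hx₁w
  by_cases hyx₂ : y = x₂ ∨ G.Adj y x₂
  · obtain ⟨hM', hsupp⟩ := hM.swap hy hux₁ hu
    refine ⟨_, y, hM', by simp [hsupp, hyu], by simp [hsupp, huw.symm, hw], hyw, ?_⟩
    rcases hyx₂ with rfl | hyx₂
    · omega
    · have := hconn.dist_triangle (u := y) (v := x₂) (w := w)
      rw [SimpleGraph.dist_eq_one_iff_adj.2 hyx₂] at this
      omega
  · rw [not_or] at hyx₂
    have hux₂ : ¬ G.Adj u x₂ := fun hux₂ => by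
      have := hconn.dist_triangle (u := u) (v := x₂) (w := w)
      rw [SimpleGraph.dist_eq_one_iff_adj.2 hux₂] at this
      omega
    have hux₂' : u ≠ x₂ := by rintro rfl; omega
    have huy : G.Adj u y := by
      rcases hclaw.adj_or_adj_or_adj hux₁.symm hx₁x₂ hx₁y hux₂' hyu.symm (Ne.symm hyx₂.1) with
        h | h | h
      exacts [absurd h hux₂, h, absurd h.symm hyx₂.2]
    obtain ⟨hM', hsupp⟩ := hM.swap (Finset.pair_comm x₁ y ▸ hy) huy hu
    refine ⟨_, x₁, hM', by simp [hsupp, hux₁.ne.symm], by simp [hsupp, huw.symm, hw], hx₁w, ?_⟩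
    omega

theorem IsMaximumMatching.eq_of_notMem_support (hconn : G.Connected) (hclaw : ClawFree G)
    {M : Finset (Finset V)} (hM : IsMaximumMatching G M) {u w : V} (hu : u ∉ support M)
    (hw : w ∉ support M) : u = w := by
  by_contra huw
  obtain ⟨M', u', hM', hu', hw', hu'w, _⟩ := hM.exists_closer hconn hclaw hu hw huw
  exact hu'w (hM'.eq_of_notMem_support hconn hclaw hu' hw')
termination_by G.dist u w

theorem exists_isMatching_card_compl_support_le_one [Fintype V] (hconn : G.Connected)
    (hclaw : ClawFree G) : ∃ M, IsMatching G M ∧ (support M)ᶜ.card ≤ 1 := by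
  obtain ⟨M, hM⟩ := exists_isMaximumMatching G
  refine ⟨M, hM.1, Finset.card_le_one.2 fun u hu w hw => ?_⟩
  exact hM.eq_of_notMem_support hconn hclaw (Finset.mem_compl.1 hu) (Finset.mem_compl.1 hw)

lemma IsMaximalEnclaveless.exists_private_neighbor {T : Finset V}
    (hT : IsMaximalEnclaveless G T) {v p : V} (hv : v ∉ T) (hvp : G.Adj v p) (hp : p ∉ T) :
    ∃ x ∈ T, G.Adj v x ∧ ∀ z, G.Adj x z → z ∉ T → z = v := by
  have hins : ¬ IsEnclaveless G (insert v T) := fun h =>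
    hv (Finset.insert_eq_self.1 (hT.2 _ (Finset.subset_insert v T) h))
  simp only [IsEnclaveless, IsEnclave, not_forall, not_not] at hins
  obtain ⟨x, hx, hxN⟩ := hins
  rcases Finset.mem_insert.1 hx with rfl | hxT
  · rcases Finset.mem_insert.1 (hxN p hvp) with rfl | hpT
    exacts [absurd hvp (G.irrefl), absurd hpT hp]
  · have hx_out : ∃ z, G.Adj x z ∧ z ∉ T := by
      by_contra! h
      exact hT.1 x ⟨hxT, h⟩
    have hx_only : ∀ z, G.Adj x z → z ∉ T → z = v := fun z hz hzT =>
      (Finset.mem_insert.1 (hxN z hz)).resolve_right hzT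
    obtain ⟨z, hxz, hzT⟩ := hx_out
    exact ⟨x, hxT, hx_only z hxz hzT ▸ hxz.symm, hx_only⟩

theorem IsMaximalEnclaveless.card_compl_le_card [Fintype V] {T : Finset V}
    (hT : IsMaximalEnclaveless G T) {M : Finset (Finset V)} (hM : IsMatching G M)
    (hcov : Tᶜ ⊆ support M) : Tᶜ.card ≤ T.card := by
  have himage : ∀ v ∈ Tᶜ, ∃ x ∈ T, G.Adj v x ∧
      ({v, x} ∈ M ∨ ∀ z, G.Adj x z → z ∉ T → z = v) := by
    intro v hv
    obtain ⟨p, hvp, hvpM⟩ := hM.exists_pair_mem (hcov hv)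
    by_cases hp : p ∈ T
    · exact ⟨p, hp, hvp, .inl hvpM⟩
    · obtain ⟨x, hxT, hvx, hx⟩ := hT.exists_private_neighbor (Finset.mem_compl.1 hv) hvp hp
      exact ⟨x, hxT, hvx, .inr hx⟩
  choose! f hfT hadj hf using himage
  refine Finset.card_le_card_of_injOn f hfT fun v hv v' hv' hvv' => ?_
  simp only [Finset.coe_compl, Set.mem_compl_iff, Finset.mem_coe] at hv hv'
  have hv'adj : G.Adj (f v) v' := hvv' ▸ (hadj v' (Finset.mem_compl.2 hv')).symm
  rcases hf v (Finset.mem_compl.2 hv) with hvM | hvonly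
  · rcases hf v' (Finset.mem_compl.2 hv') with hv'M | hv'only
    · exact hM.eq_of_pair_mem_of_pair_mem hvM (hvv' ▸ hv'M)
    · exact hv'only v (hvv' ▸ (hadj v (Finset.mem_compl.2 hv)).symm) hv
  · exact (hvonly v' hv'adj hv').symm

section Game

variable [Fintype V] [DecidableRel G.Adj]

lemma mem_playableSet {S : Finset V} {v : V} :
    v ∈ playableSet G S ↔ v ∉ S ∧ IsEnclaveless G (insert v S) := by
  simp [playableSet]

lemma mem_playableSet_empty_of_adj {v u : V} (hvu : G.Adj v u) : v ∈ playableSet G ∅ := by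
  refine mem_playableSet.2 ⟨Finset.notMem_empty v, fun x hx => ?_⟩
  simp only [IsEnclave, insert_empty_eq, Finset.mem_singleton] at hx
  obtain ⟨rfl, hxN⟩ := hx
  exact G.irrefl (hxN u hvu ▸ hvu)

lemma isMaximalEnclaveless_of_playableSet_eq_empty {T : Finset V} (hT : IsEnclaveless G T)
    (hplay : playableSet G T = ∅) : IsMaximalEnclaveless G T := by
  refine ⟨hT, fun T' hTT' hT' => ?_⟩
  by_contra hne
  obtain ⟨v, hvT', hvT⟩ := Finset.exists_of_ssubset (hTT'.ssubset_of_ne (Ne.symm hne))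
  have hv : v ∈ playableSet G T :=
    mem_playableSet.2 ⟨hvT, hT'.mono (Finset.insert_subset hvT' hTT')⟩
  simp [hplay] at hv

theorem exists_isMaximalEnclaveless_gameVal_eq (b : Bool) {S : Finset V}
    (hS : IsEnclaveless G S) :
    ∃ T, S ⊆ T ∧ IsMaximalEnclaveless G T ∧ gameVal G b S = T.card := by
  rw [gameVal]
  split_ifs with hplay hb
  · obtain ⟨v, -, hv⟩ := Finset.exists_mem_eq_sup' (Finset.attach_nonempty_iff.2 hplay)
      fun v : playableSet G S => gameVal G false (insert v.1 S)
    obtain ⟨T, hST, hT, hval⟩ :=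
      exists_isMaximalEnclaveless_gameVal_eq false (mem_playableSet.1 v.2).2
    exact ⟨T, (Finset.subset_insert _ _).trans hST, hT, hv.trans hval⟩
  · obtain ⟨v, -, hv⟩ := Finset.exists_mem_eq_inf' (Finset.attach_nonempty_iff.2 hplay)
      fun v : playableSet G S => gameVal G true (insert v.1 S)
    obtain ⟨T, hST, hT, hval⟩ :=
      exists_isMaximalEnclaveless_gameVal_eq true (mem_playableSet.1 v.2).2
    exact ⟨T, (Finset.subset_insert _ _).trans hST, hT, hv.trans hval⟩
  · exact ⟨S, subset_rfl,
      isMaximalEnclaveless_of_playableSet_eq_empty hS (Finset.not_nonempty_iff_eq_empty.1 hplay),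
      rfl⟩
termination_by Sᶜ.card
decreasing_by
  all_goals
    rw [Finset.compl_insert]
    exact Finset.card_erase_lt_of_mem (Finset.mem_compl.2 (mem_playableSet.1 v.2).1)

lemma gameVal_false_insert_le_gameVal_true {S : Finset V} {v : V} (hv : v ∈ playableSet G S) :
    gameVal G false (insert v S) ≤ gameVal G true S := by
  conv_rhs => rw [gameVal, dif_pos ⟨v, hv⟩, if_pos rfl]
  exact Finset.le_sup' (fun v : playableSet G S => gameVal G false (insert v.1 S))
    (Finset.mem_attach _ ⟨v, hv⟩)

end Game

/-- If `G` is a connected claw-free finite simple graph of order `n ≥ 2`, then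
`Ψ⁺_g(G) ≥ n/2`, i.e. `2·Ψ⁺_g(G) ≥ n`. -/
theorem clawFree_maxStartGameNum_ge {V : Type*} [Fintype V] [DecidableEq V]
    (G : SimpleGraph V) [DecidableRel G.Adj]
    (hconn : G.Connected) (hclaw : ClawFree G) (hn : 2 ≤ Fintype.card V) :
    Fintype.card V ≤ 2 * maxStartGameNum G := by
  have : Nontrivial V := Fintype.one_lt_card_iff_nontrivial.1 hn
  obtain ⟨M, hM, hunmatched⟩ := exists_isMatching_card_compl_support_le_one hconn hclaw
  obtain ⟨v₀, hv₀⟩ := Finset.card_le_one_iff_subset_singleton.1 hunmatched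
  obtain ⟨u, hv₀u⟩ := hconn.preconnected.exists_adj_of_nontrivial v₀
  have hplay := mem_playableSet_empty_of_adj hv₀u
  obtain ⟨T, hv₀T, hT, hval⟩ :=
    exists_isMaximalEnclaveless_gameVal_eq false (mem_playableSet.1 hplay).2
  have hcov : Tᶜ ⊆ support M := compl_le_iff_compl_le.1 (hv₀.trans (by simpa using hv₀T))
  calc Fintype.card V = Tᶜ.card + T.card := (Finset.card_compl_add_card T).symm
    _ ≤ 2 * gameVal G false (insert v₀ ∅) := by
      have := hT.card_compl_le_card hM hcov
      omega
    _ ≤ 2 * maxStartGameNum G :=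
      Nat.mul_le_mul_left 2 (gameVal_false_insert_le_gameVal_true hplay)

end EnclavelessGame
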